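/- For every integer t ≥ 1, every numbering of the tournament S_t has local chromatic number at least (t−1)/2, where S_1 is the one-vertex tournament and S_t = Δ(S_{t-1}, S_{t-1}, S_1) for t ≥ 2. -/

import Mathlib

structure Tournament where
  V : Type
  fintype : Fintype V
  adj : V → V → Prop
  asymm : ∀ u v, adj u v → ¬ adj v u
  total : ∀ u v, u ≠ v → adj u v ∨ adj v u

attribute [instance] Tournament.fintype

namespace Tournament

/-- A set of vertices is transitive if it includes no cyclic triangle. -/
def IsTransitiveSet (T : Tournament) (A : Set T.V) : Prop :=
  ∀ a ∈ A, ∀ b ∈ A, ∀ c ∈ A, T.adj a b → T.adj b c → ¬ T.adj c a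

/-- The chromatic number of the subtournament induced on `A`. -/
noncomputable def chiOn (T : Tournament) (A : Set T.V) : ℕ :=
  sInf {k | ∃ C : Fin k → Set T.V, (∀ i, T.IsTransitiveSet (C i)) ∧ A ⊆ ⋃ i, C i}

noncomputable def chi (T : Tournament) : ℕ := T.chiOn Set.univ

def outN (T : Tournament) (v : T.V) : Set T.V := {u | T.adj v u}
def inN (T : Tournament) (v : T.V) : Set T.V := {u | T.adj u v}

/-- The domination number of the subtournament induced on `A`. -/
noncomputable def domOn (T : Tournament) (A : Set T.V) : ℕ :=
  sInf {n | ∃ X : Finset T.V, ↑X ⊆ A ∧ (∀ v ∈ A, v ∉ X → ∃ x ∈ X, T.adj x v) ∧ X.card = n}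

noncomputable def dom (T : Tournament) : ℕ := T.domOn Set.univ

/-- `A ⇒ B`: every edge between `A` and `B` is directed from `A` to `B`. -/
def CompleteTo (T : Tournament) (A B : Set T.V) : Prop :=
  ∀ a ∈ A, ∀ b ∈ B, T.adj a b

def CompletePair (T : Tournament) (A B : Set T.V) : Prop :=
  Disjoint A B ∧ T.CompleteTo A B

/-- `G` has a subtournament inside `A` isomorphic to `H`. -/
def ContainsOn (G : Tournament) (A : Set G.V) (H : Tournament) : Prop :=
  ∃ f : H.V → G.V, Function.Injective f ∧ (∀ u, f u ∈ A) ∧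
    ∀ u v, H.adj u v ↔ G.adj (f u) (f v)

def Contains (G H : Tournament) : Prop := G.ContainsOn Set.univ H

def IsHero (H : Tournament) : Prop :=
  ∃ c > 0, ∀ G : Tournament, ¬ G.Contains H → G.chi < c

def IsRebel (H : Tournament) : Prop :=
  ∃ c > 0, ∀ G : Tournament, ¬ G.Contains H → G.dom < c

/-- The one-vertex tournament. -/
def oneT : Tournament where
  V := PUnit
  fintype := inferInstance
  adj _ _ := False
  asymm := by intro u v h; exact h.elim
  total := by intro u v h; cases u; cases v; exact absurd rfl h

/-- `Δ(H1,H2,H3)`: disjoint copies of `H1,H2,H3` with `A1 ⇒ A2 ⇒ A3 ⇒ A1`. -/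
def delta (H1 H2 H3 : Tournament) : Tournament where
  V := H1.V ⊕ H2.V ⊕ H3.V
  fintype := inferInstance
  adj x y :=
    match x, y with
    | .inl a, .inl b => H1.adj a b
    | .inl _, .inr (.inl _) => True
    | .inl _, .inr (.inr _) => False
    | .inr (.inl _), .inl _ => False
    | .inr (.inl a), .inr (.inl b) => H2.adj a b
    | .inr (.inl _), .inr (.inr _) => True
    | .inr (.inr _), .inl _ => True
    | .inr (.inr _), .inr (.inl _) => False
    | .inr (.inr a), .inr (.inr b) => H3.adj a b
  asymm := by
    rintro (a | a | a) (b | b | b) h <;> simp only at h ⊢ <;>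
      first
        | exact H1.asymm _ _ h
        | exact H2.asymm _ _ h
        | exact H3.asymm _ _ h
        | exact h
        | exact fun h' => h'
  total := by
    rintro (a | a | a) (b | b | b) h <;> simp only at h ⊢ <;>
      first
        | exact H1.total _ _ (by simpa using h)
        | exact H2.total _ _ (by simpa using h)
        | exact H3.total _ _ (by simpa using h)
        | exact Or.inl trivial
        | exact Or.inr trivial

/-- The tournament obtained from disjoint copies of `H1, H2` by directing
all edges from the copy of `H1` to the copy of `H2`. -/
def join2 (H1 H2 : Tournament) : Tournament where
  V := H1.V ⊕ H2.V
  fintype := inferInstance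
  adj x y :=
    match x, y with
    | .inl a, .inl b => H1.adj a b
    | .inl _, .inr _ => True
    | .inr _, .inl _ => False
    | .inr a, .inr b => H2.adj a b
  asymm := by
    rintro (a | a) (b | b) h <;> simp only at h ⊢ <;>
      first
        | exact H1.asymm _ _ h
        | exact H2.asymm _ _ h
        | exact h
        | exact fun h' => h'
  total := by
    rintro (a | a) (b | b) h <;> simp only at h ⊢ <;>
      first
        | exact H1.total _ _ (by simpa using h)
        | exact H2.total _ _ (by simpa using h)
        | exact Or.inl trivial
        | exact Or.inr trivial

/-- The set of backward out-neighbours and forward in-neighbours of the `i`-th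
vertex of the numbering `σ`. -/
def localSet (G : Tournament) {n : ℕ} (σ : Fin n ≃ G.V) (i : Fin n) : Set G.V :=
  {v | ∃ j : Fin n, v = σ j ∧
    ((j < i ∧ G.adj (σ i) (σ j)) ∨ (i < j ∧ G.adj (σ j) (σ i)))}

/-- The numbering `σ` has local chromatic number at most `c`. -/
def LocalChiLE (G : Tournament) {n : ℕ} (σ : Fin n ≃ G.V) (c : ℕ) : Prop :=
  ∀ i : Fin n, G.chiOn (G.localSet σ i) ≤ c
/-- `sAux 0` is the one-vertex tournament `S_1`, and `sAux t` is
`S_{t+1} = Δ(S_t, S_t, S_1)`. -/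
def sAux : ℕ → Tournament
  | 0 => oneT
  | (t+1) => delta (sAux t) (sAux t) oneT

/-! Suppose `A ⇒ B`, `B ⇒ z` and `z ⇒ A`. A transitive set containing `z` cannot meet both `A`
and `B`, as `a → b → z → a`; so every colouring spends on `z` a colour that one of `A`, `B` does
not need, and `χ ≥ min (χ A) (χ B) + 1`. Iterating along `S_{t+1} = Δ(S_t, S_t, S_1)` gives
`χ(S_t) ≥ t`.

In a numbering, the vertices of `A` before `z` and those of `B` after `z` lie in the local set
of `z`. If all of `A` precedes `z` this bounds `χ A`; otherwise some `a ∈ A` comes after `z`,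
and the vertices of `B` before `z` lie in the local set of `a`, so `χ B` is at most twice the
local chromatic number. -/

lemma isTransitiveSet_singleton (T : Tournament) (v : T.V) : T.IsTransitiveSet {v} := by
  rintro a rfl b rfl c - hab -
  exact (T.asymm _ _ hab hab).elim

section chiOn

variable {T : Tournament} {A B : Set T.V}

lemma chiOn_le_of_cover {k : ℕ} (C : Fin k → Set T.V) (hC : ∀ i, T.IsTransitiveSet (C i))
    (hA : A ⊆ ⋃ i, C i) : T.chiOn A ≤ k :=
  Nat.sInf_le ⟨C, hC, hA⟩

lemma exists_cover_chiOn (A : Set T.V) :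
    ∃ C : Fin (T.chiOn A) → Set T.V, (∀ i, T.IsTransitiveSet (C i)) ∧ A ⊆ ⋃ i, C i := by
  refine Nat.sInf_mem (s := {k | ∃ C : Fin k → Set T.V, (∀ i, T.IsTransitiveSet (C i)) ∧
    A ⊆ ⋃ i, C i}) ⟨Fintype.card T.V, fun i => {(Fintype.equivFin T.V).symm i},
      fun i => T.isTransitiveSet_singleton _, fun v _ => ?_⟩
  exact Set.mem_iUnion.2 ⟨Fintype.equivFin T.V v, by simp⟩

lemma chiOn_mono (h : A ⊆ B) : T.chiOn A ≤ T.chiOn B := by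
  obtain ⟨C, hC, hB⟩ := exists_cover_chiOn B
  exact chiOn_le_of_cover C hC (h.trans hB)

lemma chiOn_empty : T.chiOn ∅ = 0 :=
  Nat.le_zero.1 (chiOn_le_of_cover Fin.elim0 (fun i => i.elim0) (Set.empty_subset _))

lemma chiOn_pos (hA : A.Nonempty) : 0 < T.chiOn A := by
  obtain ⟨C, -, hcover⟩ := exists_cover_chiOn A
  obtain ⟨i, -⟩ := Set.mem_iUnion.1 (hcover hA.some_mem)
  exact i.pos

lemma chiOn_union_le (A B : Set T.V) : T.chiOn (A ∪ B) ≤ T.chiOn A + T.chiOn B := by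
  obtain ⟨C, hC, hA⟩ := exists_cover_chiOn A
  obtain ⟨D, hD, hB⟩ := exists_cover_chiOn B
  refine chiOn_le_of_cover (Fin.append C D) (Fin.addCases (by simpa using hC) (by simpa using hD))
    (Set.union_subset (hA.trans ?_) (hB.trans ?_))
  · exact Set.iUnion_subset fun i => by
      simpa using Set.subset_iUnion (Fin.append C D) (Fin.castAdd _ i)
  · exact Set.iUnion_subset fun i => by
      simpa using Set.subset_iUnion (Fin.append C D) (Fin.natAdd _ i)

lemma chiOn_add_one_le_of_cover {k : ℕ} (C : Fin k → Set T.V)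
    (hC : ∀ i, T.IsTransitiveSet (C i)) (hA : A ⊆ ⋃ i, C i) (i₀ : Fin k)
    (hi₀ : Disjoint A (C i₀)) : T.chiOn A + 1 ≤ k := by
  obtain _ | k := k
  · exact i₀.elim0
  refine Nat.succ_le_succ (chiOn_le_of_cover (fun j => C (i₀.succAbove j)) (fun j => hC _) ?_)
  intro v hv
  obtain ⟨i, hi⟩ := Set.mem_iUnion.1 (hA hv)
  obtain ⟨j, rfl⟩ :=
    Fin.exists_succAbove_eq fun h : i = i₀ => hi₀.notMem_of_mem_left hv (h ▸ hi)
  exact Set.mem_iUnion.2 ⟨j, hi⟩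

lemma chi_le_chiOn_range {H : Tournament} (f : H.V → T.V)
    (hf : ∀ u v, H.adj u v → T.adj (f u) (f v)) : H.chi ≤ T.chiOn (Set.range f) := by
  obtain ⟨C, hC, hcover⟩ := exists_cover_chiOn (Set.range f)
  refine chiOn_le_of_cover (fun i => f ⁻¹' C i) (fun i a ha b hb c hc hab hbc hca => ?_)
    fun u _ => by simpa using hcover ⟨u, rfl⟩
  exact hC i _ ha _ hb _ hc (hf _ _ hab) (hf _ _ hbc) (hf _ _ hca)

end chiOn

section localSet

variable {G : Tournament} {n : ℕ} (σ : Fin n ≃ G.V)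

lemma mem_localSet_of_lt {u v : G.V} (h : σ.symm v < σ.symm u) (huv : G.adj u v) :
    v ∈ G.localSet σ (σ.symm u) :=
  ⟨σ.symm v, (σ.apply_symm_apply v).symm, Or.inl ⟨h, by simpa using huv⟩⟩

lemma mem_localSet_of_gt {u v : G.V} (h : σ.symm u < σ.symm v) (hvu : G.adj v u) :
    v ∈ G.localSet σ (σ.symm u) :=
  ⟨σ.symm v, (σ.apply_symm_apply v).symm, Or.inr ⟨h, by simpa using hvu⟩⟩

lemma chiOn_le_add_of_notMem {A : Set G.V} {z : G.V} (hz : z ∉ A) :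
    G.chiOn A ≤
      G.chiOn {v ∈ A | σ.symm v < σ.symm z} + G.chiOn {v ∈ A | σ.symm z < σ.symm v} := by
  refine (chiOn_mono fun v hv => ?_).trans (chiOn_union_le _ _)
  rcases lt_trichotomy (σ.symm v) (σ.symm z) with h | h | h
  · exact Or.inl ⟨hv, h⟩
  · exact (hz (σ.symm.injective h ▸ hv)).elim
  · exact Or.inr ⟨hv, h⟩

end localSet

section cyclicTriple

variable {G : Tournament} {A B : Set G.V} {z : G.V}

lemma min_chiOn_add_one_le_chi (hAB : G.CompleteTo A B) (hBz : G.CompleteTo B {z})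
    (hzA : G.CompleteTo {z} A) : min (G.chiOn A) (G.chiOn B) + 1 ≤ G.chi := by
  obtain ⟨C, hC, hcover⟩ := exists_cover_chiOn (T := G) Set.univ
  obtain ⟨i₀, hz⟩ := Set.mem_iUnion.1 (hcover (Set.mem_univ z))
  have hdisj : Disjoint A (C i₀) ∨ Disjoint B (C i₀) := by
    by_contra! h
    obtain ⟨a, ha, haC⟩ := Set.not_disjoint_iff.1 h.1
    obtain ⟨b, hb, hbC⟩ := Set.not_disjoint_iff.1 h.2
    exact hC i₀ a haC b hbC z hz (hAB a ha b hb) (hBz b hb z rfl) (hzA z rfl a ha)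
  rcases hdisj with hA | hB
  · exact (Nat.add_le_add_right (min_le_left _ _) 1).trans
      (chiOn_add_one_le_of_cover C hC (fun v _ => hcover (Set.mem_univ v)) i₀ hA)
  · exact (Nat.add_le_add_right (min_le_right _ _) 1).trans
      (chiOn_add_one_le_of_cover C hC (fun v _ => hcover (Set.mem_univ v)) i₀ hB)

lemma min_chiOn_le_two_mul_of_localChiLE {n : ℕ} {σ : Fin n ≃ G.V} {m : ℕ}
    (hσ : G.LocalChiLE σ m) (hAB : G.CompleteTo A B) (hBz : G.CompleteTo B {z})
    (hzA : G.CompleteTo {z} A) : min (G.chiOn A) (G.chiOn B) ≤ 2 * m := by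
  have hAz_loc : {v ∈ A | σ.symm v < σ.symm z} ⊆ G.localSet σ (σ.symm z) :=
    fun a ⟨ha, h⟩ => mem_localSet_of_lt σ h (hzA z rfl a ha)
  have hBz_loc : {v ∈ B | σ.symm z < σ.symm v} ⊆ G.localSet σ (σ.symm z) :=
    fun b ⟨hb, h⟩ => mem_localSet_of_gt σ h (hBz b hb z rfl)
  have hA := chiOn_le_add_of_notMem σ fun hz => G.asymm z z (hzA z rfl z hz) (hzA z rfl z hz)
  have hB := chiOn_le_add_of_notMem σ fun hz => G.asymm z z (hBz z hz z rfl) (hBz z hz z rfl)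
  rcases Set.eq_empty_or_nonempty {v ∈ A | σ.symm z < σ.symm v} with hAfter | ⟨a, ha, hza⟩
  · rw [hAfter, chiOn_empty] at hA
    have := (chiOn_mono hAz_loc).trans (hσ _)
    omega
  · have hBa_loc : {v ∈ B | σ.symm v < σ.symm z} ⊆ G.localSet σ (σ.symm a) :=
      fun b ⟨hb, h⟩ => mem_localSet_of_lt σ (h.trans hza) (hAB a ha b hb)
    have := (chiOn_mono hBa_loc).trans (hσ _)
    have := (chiOn_mono hBz_loc).trans (hσ _)
    omega

end cyclicTriple

section delta

variable (H₁ H₂ H₃ : Tournament)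

def deltaFst : Set (delta H₁ H₂ H₃).V := Set.range Sum.inl

def deltaSnd : Set (delta H₁ H₂ H₃).V := Set.range (Sum.inr ∘ Sum.inl)

variable {H₁ H₂ H₃}

lemma chi_le_chiOn_deltaFst : H₁.chi ≤ (delta H₁ H₂ H₃).chiOn (deltaFst H₁ H₂ H₃) :=
  chi_le_chiOn_range _ fun _ _ h => h

lemma chi_le_chiOn_deltaSnd : H₂.chi ≤ (delta H₁ H₂ H₃).chiOn (deltaSnd H₁ H₂ H₃) :=
  chi_le_chiOn_range _ fun _ _ h => h

lemma completeTo_deltaFst_deltaSnd :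
    (delta H₁ H₂ H₃).CompleteTo (deltaFst H₁ H₂ H₃) (deltaSnd H₁ H₂ H₃) := by
  rintro _ ⟨a, rfl⟩ _ ⟨b, rfl⟩
  trivial

lemma completeTo_deltaSnd_inr_inr (c : H₃.V) :
    (delta H₁ H₂ H₃).CompleteTo (deltaSnd H₁ H₂ H₃) {.inr (.inr c)} := by
  rintro _ ⟨b, rfl⟩ _ rfl
  trivial

lemma completeTo_inr_inr_deltaFst (c : H₃.V) :
    (delta H₁ H₂ H₃).CompleteTo {.inr (.inr c)} (deltaFst H₁ H₂ H₃) := by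
  rintro _ rfl _ ⟨a, rfl⟩
  trivial

lemma min_chi_add_one_le_chi_delta (c : H₃.V) :
    min H₁.chi H₂.chi + 1 ≤ (delta H₁ H₂ H₃).chi :=
  (Nat.add_le_add_right (min_le_min chi_le_chiOn_deltaFst chi_le_chiOn_deltaSnd) 1).trans
    (min_chiOn_add_one_le_chi completeTo_deltaFst_deltaSnd (completeTo_deltaSnd_inr_inr c)
      (completeTo_inr_inr_deltaFst c))

lemma min_chi_le_two_mul_of_localChiLE (c : H₃.V) {n : ℕ} {σ : Fin n ≃ (delta H₁ H₂ H₃).V}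
    {m : ℕ} (hσ : (delta H₁ H₂ H₃).LocalChiLE σ m) : min H₁.chi H₂.chi ≤ 2 * m :=
  (min_le_min chi_le_chiOn_deltaFst chi_le_chiOn_deltaSnd).trans
    (min_chiOn_le_two_mul_of_localChiLE hσ completeTo_deltaFst_deltaSnd
      (completeTo_deltaSnd_inr_inr c) (completeTo_inr_inr_deltaFst c))

end delta

lemma le_chi_sAux (s : ℕ) : s + 1 ≤ (sAux s).chi := by
  induction s with
  | zero => exact chiOn_pos ⟨PUnit.unit, Set.mem_univ _⟩
  | succ s ih =>
    have h := min_chi_add_one_le_chi_delta (H₁ := sAux s) (H₂ := sAux s) (H₃ := oneT) PUnit.unit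
    rw [min_self] at h
    exact (Nat.add_le_add_right ih 1).trans h

end Tournament

open Tournament in
theorem sTour_local_chi_general (t : ℕ)
    (σ : Fin (Fintype.card (sAux (t - 1)).V) ≃ (sAux (t - 1)).V) :
    ∃ i, t - 1 ≤ 2 * (sAux (t - 1)).chiOn ((sAux (t - 1)).localSet σ i) := by
  generalize t - 1 = s at σ ⊢
  rcases s with _ | s
  · exact ⟨σ.symm PUnit.unit, Nat.zero_le _⟩
  by_contra! hsmall
  have hlocal : (delta (sAux s) (sAux s) oneT).LocalChiLE σ (s / 2) := fun i => by
    show (sAux (s + 1)).chiOn ((sAux (s + 1)).localSet σ i) ≤ s / 2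
    have := hsmall i
    omega
  have := min_chi_le_two_mul_of_localChiLE PUnit.unit hlocal
  rw [min_self] at this
  have := le_chi_sAux s
  omega

open Tournament in
/-- Every numbering of `S_t` has local chromatic number at least `(t-1)/2`:
some vertex's set of backward out-neighbours and forward in-neighbours `L`
satisfies `2·χ(L) ≥ t - 1`. -/
theorem sTour_local_chi (t : ℕ) (ht : 1 ≤ t)
    (σ : Fin (Fintype.card (sAux (t - 1)).V) ≃ (sAux (t - 1)).V) :
    ∃ i, t - 1 ≤ 2 * (sAux (t - 1)).chiOn ((sAux (t - 1)).localSet σ i) :=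
  sTour_local_chi_general t σ
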